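/- Let p > 2 and let μ be a probability measure on ℝ² with density m ∈ Lᵖ(ℝ²), and let ℋμ(z) := ∫_{ℝ²} (z − w)/|z − w|² μ(dw). Then for every z ∈ ℝ², all of the following integrals converge absolutely and |ℋμ(z)|² − 2 ∫_{ℝ²} ⟨(z − w)/|z − w|², ℋμ(w)⟩ μ(dw) = ∫∫_{(w,u) ∈ ℝ²×ℝ², w ≠ u} 2(|z−w|²|z−u|² − ⟨z−w, z−u⟩²)/(|z−w|²|z−u|²|w−u|²) μ(dw) μ(du). -/

import Mathlib

/-
With `K x = (‖x‖²)⁻¹ • x`, three points `z, w, u` that are pairwise distinct satisfy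
`⟪K(z-w), K(z-u)⟫ - ⟪K(z-w), K(w-u)⟫ - ⟪K(z-u), K(u-w)⟫ = 2 / D²(z-w, z-u)`, a rational
identity in `‖z-w‖², ‖z-u‖², ⟪z-w, z-u⟫`. Integrate it against `μ ⊗ μ`: by Fubini the first
term gives `‖ℋμ(z)‖²` and each of the other two gives `∫ ⟪K(z-w), ℋμ(w)⟫ dμ(w)`, while the
excluded points form a null set because `μ` has no atoms. Fubini applies because the potential
`∫ ‖z-w‖⁻¹ dμ(w)` is bounded uniformly in `z`: away from `z` by the total mass, and near `z` by
Hölder, since `‖x‖⁻¹` lies in `L^{p'}` of the unit disc when `p' < 2`, i.e. when `p > 2`.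
-/

open MeasureTheory RealInnerProductSpace

/-- The planar Coulomb transform of a measure `μ` on `ℝ²`. -/
noncomputable def coulombTransform (μ : Measure (EuclideanSpace ℝ (Fin 2)))
    (z : EuclideanSpace ℝ (Fin 2)) : EuclideanSpace ℝ (Fin 2) :=
  ∫ w, (‖z - w‖ ^ 2)⁻¹ • (z - w) ∂μ

/-- The circumcircle kernel `2/D²(z−w, z−u)`, where `D(ξ,η)` is the diameter of the
circumcircle of the triangle with vertices `0, ξ, η`. -/
noncomputable def circKernel (z w u : EuclideanSpace ℝ (Fin 2)) : ℝ :=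
  2 * (‖z - w‖ ^ 2 * ‖z - u‖ ^ 2 - ⟪z - w, z - u⟫ ^ 2)
    / (‖z - w‖ ^ 2 * ‖z - u‖ ^ 2 * ‖w - u‖ ^ 2)

open Metric Module
open scoped ENNReal NNReal

section Kernel

variable {E : Type*} [NormedAddCommGroup E] [InnerProductSpace ℝ E]

lemma enorm_inner_le (a b : E) : ‖⟪a, b⟫‖ₑ ≤ ‖a‖ₑ * ‖b‖ₑ := by
  simpa only [enorm, ← ENNReal.coe_mul] using ENNReal.coe_le_coe.2 (nnnorm_inner_le_nnnorm a b)

noncomputable def coulombKernel (x : E) : E := (‖x‖ ^ 2)⁻¹ • x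

lemma norm_coulombKernel (x : E) : ‖coulombKernel x‖ = ‖x‖⁻¹ := by
  rcases eq_or_ne x 0 with rfl | hx
  · simp [coulombKernel]
  · have : ‖x‖ ≠ 0 := norm_ne_zero_iff.2 hx
    rw [coulombKernel, norm_smul, norm_inv, norm_pow, norm_norm]
    field_simp

lemma enorm_coulombKernel (x : E) : ‖coulombKernel x‖ₑ = ENNReal.ofReal ‖x‖⁻¹ := by
  rw [← ofReal_norm, norm_coulombKernel]

lemma measurable_coulombKernel [MeasurableSpace E] [BorelSpace E] :
    Measurable (coulombKernel : E → E) := by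
  unfold coulombKernel; fun_prop

theorem inner_coulombKernel_circumcircle {a b : E} (ha : a ≠ 0) (hb : b ≠ 0) (hab : a ≠ b) :
    ⟪coulombKernel a, coulombKernel b⟫ - ⟪coulombKernel a, coulombKernel (b - a)⟫
        - ⟪coulombKernel b, coulombKernel (a - b)⟫
      = 2 * (‖a‖ ^ 2 * ‖b‖ ^ 2 - ⟪a, b⟫ ^ 2) / (‖a‖ ^ 2 * ‖b‖ ^ 2 * ‖b - a‖ ^ 2) := by
  have hA : ‖a‖ ^ 2 ≠ 0 := by positivity
  have hB : ‖b‖ ^ 2 ≠ 0 := by positivity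
  have hS : ‖b - a‖ ^ 2 ≠ 0 := pow_ne_zero _ (norm_ne_zero_iff.2 (sub_ne_zero.2 hab.symm))
  have hS' : ‖b - a‖ ^ 2 = ‖b‖ ^ 2 - 2 * ⟪a, b⟫ + ‖a‖ ^ 2 := by
    rw [norm_sub_sq_real, real_inner_comm]
  simp only [coulombKernel, real_inner_smul_left, real_inner_smul_right, inner_sub_right,
    real_inner_self_eq_norm_sq, norm_sub_rev a b, real_inner_comm a b]
  generalize ‖b - a‖ ^ 2 = S at *
  field_simp
  subst hS'
  ring

end Kernel

section Potential

variable {E : Type*} [NormedAddCommGroup E] [NormedSpace ℝ E] [FiniteDimensional ℝ E]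
  [MeasurableSpace E] [BorelSpace E] {μ : Measure E} [μ.IsAddHaarMeasure]

lemma lintegral_ball_inv_norm_rpow_lt_top {q : ℝ} (hq0 : 0 < q) (hq : q < finrank ℝ E) :
    ∫⁻ x in ball 0 1, ENNReal.ofReal ‖x‖⁻¹ ^ q ∂μ < ∞ := by
  have hint : IntegrableOn (fun x : E => ‖x‖ ^ (-q)) (ball 0 1) μ := by
    refine integrableOn_ball_of_norm_le_rpow (C := 1) (by exact_mod_cast hq0.trans hq) hq
      (ae_of_all _ fun x => ?_)
      (measurable_norm.pow_const _).aestronglyMeasurable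
    rw [one_mul, Real.norm_of_nonneg (by positivity)]
  convert hint.lintegral_lt_top using 3 with x
  rw [ENNReal.ofReal_rpow_of_nonneg (by positivity) hq0.le, Real.inv_rpow (norm_nonneg _),
    Real.rpow_neg (norm_nonneg _)]

theorem lintegral_inv_norm_sub_withDensity_le {p q : ℝ} (hpq : p.HolderConjugate q)
    {m : E → ℝ} (hm : AEMeasurable m μ) (z : E) :
    ∫⁻ w, ENNReal.ofReal ‖z - w‖⁻¹ ∂μ.withDensity (fun w => ENNReal.ofReal (m w))
      ≤ μ.withDensity (fun w => ENNReal.ofReal (m w)) Set.univ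
        + eLpNorm m (ENNReal.ofReal p) μ
          * (∫⁻ x in ball 0 1, ENNReal.ofReal ‖x‖⁻¹ ^ q ∂μ) ^ (1 / q) := by
  set ν := μ.withDensity (fun w => ENNReal.ofReal (m w))
  set g : E → ℝ≥0∞ := (ball 0 1).indicator fun x => ENNReal.ofReal ‖x‖⁻¹
  have hg : Measurable g := (Measurable.ennreal_ofReal (by fun_prop)).indicator measurableSet_ball
  have hsplit : ∀ x : E, ENNReal.ofReal ‖x‖⁻¹ ≤ 1 + g x := by
    intro x
    by_cases hx : x ∈ ball (0 : E) 1
    · simp only [g, Set.indicator_of_mem hx]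
      exact le_add_self
    · simp only [g, Set.indicator_of_notMem hx, add_zero]
      refine ENNReal.ofReal_le_one.2 (inv_le_one_of_one_le₀ ?_)
      simpa using hx
  have hm' : AEMeasurable (fun w => ENNReal.ofReal (m w)) μ := hm.ennreal_ofReal
  have hnear : ∫⁻ w, g (z - w) ∂ν
      ≤ eLpNorm m (ENNReal.ofReal p) μ
          * (∫⁻ x in ball 0 1, ENNReal.ofReal ‖x‖⁻¹ ^ q ∂μ) ^ (1 / q) := by
    have hp : 0 < p := hpq.pos
    have hgz : AEMeasurable (fun w => g (z - w)) μ := (hg.comp (by fun_prop)).aemeasurable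
    rw [lintegral_withDensity_eq_lintegral_mul₀ hm' hgz]
    refine (ENNReal.lintegral_mul_le_Lp_mul_Lq μ hpq hm' hgz).trans (mul_le_mul' ?_ ?_)
    · rw [eLpNorm_eq_lintegral_rpow_enorm_toReal (by simpa using hp) (by simp),
        ENNReal.toReal_ofReal hp.le]
      gcongr
      exact Real.ofReal_le_enorm _
    · rw [lintegral_sub_left_eq_self (fun x => g x ^ q) z, ← lintegral_indicator measurableSet_ball]
      refine le_of_eq (congrArg (· ^ (1 / q)) (lintegral_congr fun x => ?_))
      by_cases hx : x ∈ ball (0 : E) 1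
      · simp [g, hx]
      · simp [g, hx, ENNReal.zero_rpow_of_pos hpq.symm.pos]
  calc ∫⁻ w, ENNReal.ofReal ‖z - w‖⁻¹ ∂ν ≤ ∫⁻ w, 1 + g (z - w) ∂ν :=
        lintegral_mono fun w => hsplit _
    _ = ν Set.univ + ∫⁻ w, g (z - w) ∂ν := by
      rw [lintegral_add_left measurable_const, lintegral_const, one_mul]
    _ ≤ _ := by gcongr

end Potential

theorem integrable_prod_of_enorm_le_mul {α β F : Type*} [MeasurableSpace α] [MeasurableSpace β]
    [NormedAddCommGroup F] {μ : Measure α} {ν : Measure β} [SFinite ν] {f : α × β → F}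
    (hf : AEStronglyMeasurable f (μ.prod ν)) {g : α → ℝ≥0} {h : α → β → ℝ≥0∞} {C C' : ℝ≥0}
    (hg : ∫⁻ x, g x ∂μ ≤ C) (hh : ∀ x, ∫⁻ y, h x y ∂ν ≤ C')
    (hfgh : ∀ x y, ‖f (x, y)‖ₑ ≤ g x * h x y) :
    Integrable f (μ.prod ν) := by
  refine ⟨hf, (lintegral_prod_le _).trans_lt ?_⟩
  calc ∫⁻ x, ∫⁻ y, ‖f (x, y)‖ₑ ∂ν ∂μ ≤ ∫⁻ x, g x * C' ∂μ := by
        refine lintegral_mono fun x => ?_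
        calc ∫⁻ y, ‖f (x, y)‖ₑ ∂ν ≤ ∫⁻ y, g x * h x y ∂ν := lintegral_mono (hfgh x)
          _ = g x * ∫⁻ y, h x y ∂ν := lintegral_const_mul' _ _ ENNReal.coe_ne_top
          _ ≤ g x * C' := by gcongr; exact hh x
    _ = (∫⁻ x, g x ∂μ) * C' := lintegral_mul_const' _ _ ENNReal.coe_ne_top
    _ ≤ C * C' := by gcongr
    _ < ∞ := ENNReal.mul_lt_top ENNReal.coe_lt_top ENNReal.coe_lt_top

local notation "ℝ²" => EuclideanSpace ℝ (Fin 2)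

section BoundedPotential

variable {μ : Measure ℝ²} {C : ℝ≥0}

lemma integrable_coulombKernel_sub {z : ℝ²} (hz : ∫⁻ w, ‖coulombKernel (z - w)‖ₑ ∂μ ≤ C) :
    Integrable (fun w => coulombKernel (z - w)) μ :=
  ⟨(measurable_coulombKernel.comp (by fun_prop)).aestronglyMeasurable,
    hz.trans_lt ENNReal.coe_lt_top⟩

lemma norm_coulombTransform_le {z : ℝ²} (hz : ∫⁻ w, ‖coulombKernel (z - w)‖ₑ ∂μ ≤ C) :
    ‖coulombTransform μ z‖ ≤ C := by
  rw [← coe_nnnorm, NNReal.coe_le_coe, ← enorm_le_coe]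
  exact (enorm_integral_le_lintegral_enorm _).trans hz

lemma stronglyMeasurable_coulombTransform [SFinite μ] :
    StronglyMeasurable (coulombTransform μ) :=
  (measurable_coulombKernel.comp (by fun_prop : Measurable fun q : ℝ² × ℝ² => q.1 - q.2))
    |>.stronglyMeasurable.integral_prod_right'

lemma integrable_inner_coulombKernel_coulombTransform [SFinite μ]
    (hC : ∀ z, ∫⁻ w, ‖coulombKernel (z - w)‖ₑ ∂μ ≤ C) (z : ℝ²) :
    Integrable (fun w => ⟪coulombKernel (z - w), coulombTransform μ w⟫) μ := by
  refine ((integrable_coulombKernel_sub (hC z)).norm.mul_const C).mono'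
    (((measurable_coulombKernel.comp (by fun_prop)).stronglyMeasurable.inner
      stronglyMeasurable_coulombTransform).aestronglyMeasurable) (ae_of_all _ fun w => ?_)
  exact (norm_inner_le_norm _ _).trans (by gcongr; exact norm_coulombTransform_le (hC w))

lemma integrable_inner_coulombKernel_prod [SFinite μ] {z : ℝ²}
    (hz : ∫⁻ w, ‖coulombKernel (z - w)‖ₑ ∂μ ≤ C) :
    Integrable (fun q : ℝ² × ℝ² => ⟪coulombKernel (z - q.1), coulombKernel (z - q.2)⟫)
      (μ.prod μ) :=
  integrable_prod_of_enorm_le_mul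
    ((measurable_coulombKernel.comp (by fun_prop)).stronglyMeasurable.inner
      (measurable_coulombKernel.comp (by fun_prop)).stronglyMeasurable).aestronglyMeasurable
    (g := fun w => ‖coulombKernel (z - w)‖₊) hz (fun _ => hz) fun _ _ => enorm_inner_le _ _

lemma integrable_inner_coulombKernel_chain [SFinite μ]
    (hC : ∀ z, ∫⁻ w, ‖coulombKernel (z - w)‖ₑ ∂μ ≤ C) (z : ℝ²) :
    Integrable (fun q : ℝ² × ℝ² => ⟪coulombKernel (z - q.1), coulombKernel (q.1 - q.2)⟫)
      (μ.prod μ) :=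
  integrable_prod_of_enorm_le_mul
    ((measurable_coulombKernel.comp (by fun_prop)).stronglyMeasurable.inner
      (measurable_coulombKernel.comp (by fun_prop)).stronglyMeasurable).aestronglyMeasurable
    (g := fun w => ‖coulombKernel (z - w)‖₊) (hC z) hC fun _ _ => enorm_inner_le _ _

lemma integral_inner_coulombKernel_prod [SFinite μ] {z : ℝ²}
    (hz : ∫⁻ w, ‖coulombKernel (z - w)‖ₑ ∂μ ≤ C) :
    ∫ q : ℝ² × ℝ², ⟪coulombKernel (z - q.1), coulombKernel (z - q.2)⟫ ∂(μ.prod μ)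
      = ‖coulombTransform μ z‖ ^ 2 := by
  have hK := integrable_coulombKernel_sub hz
  rw [integral_prod _ (integrable_inner_coulombKernel_prod hz), ← real_inner_self_eq_norm_sq]
  calc ∫ w, ∫ u, ⟪coulombKernel (z - w), coulombKernel (z - u)⟫ ∂μ ∂μ
      = ∫ w, ⟪coulombTransform μ z, coulombKernel (z - w)⟫ ∂μ := by
        congr 1 with w
        rw [real_inner_comm]
        exact integral_inner hK _
    _ = ⟪coulombTransform μ z, coulombTransform μ z⟫ := integral_inner hK _

lemma integral_inner_coulombKernel_chain [SFinite μ]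
    (hC : ∀ z, ∫⁻ w, ‖coulombKernel (z - w)‖ₑ ∂μ ≤ C) (z : ℝ²) :
    ∫ q : ℝ² × ℝ², ⟪coulombKernel (z - q.1), coulombKernel (q.1 - q.2)⟫ ∂(μ.prod μ)
      = ∫ w, ⟪coulombKernel (z - w), coulombTransform μ w⟫ ∂μ := by
  rw [integral_prod _ (integrable_inner_coulombKernel_chain hC z)]
  congr 1 with w
  exact integral_inner (integrable_coulombKernel_sub (hC w)) (coulombKernel (z - w))

lemma ae_prod_pairwise_ne [SFinite μ] [NullSingletonClass μ] (z : ℝ²) :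
    ∀ᵐ q : ℝ² × ℝ² ∂(μ.prod μ), q.1 ≠ z ∧ q.2 ≠ z ∧ q.1 ≠ q.2 := by
  have h₁ : ∀ᵐ q : ℝ² × ℝ² ∂(μ.prod μ), q.1 ≠ z :=
    Measure.quasiMeasurePreserving_fst.ae (Measure.ae_ne μ z)
  have h₂ : ∀ᵐ q : ℝ² × ℝ² ∂(μ.prod μ), q.2 ≠ z :=
    Measure.quasiMeasurePreserving_snd.ae (Measure.ae_ne μ z)
  have h₃ : ∀ᵐ q : ℝ² × ℝ² ∂(μ.prod μ), q.1 ≠ q.2 :=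
    (Measure.ae_prod_iff_ae_ae measurableSet_diagonal.compl).2
      (ae_of_all _ fun w => (Measure.ae_ne μ w).mono fun _ => Ne.symm)
  filter_upwards [h₁, h₂, h₃] with q hq₁ hq₂ hq₃ using ⟨hq₁, hq₂, hq₃⟩

theorem coulombTransform_circumcircle_identity_of_lintegral_le [SFinite μ] [NullSingletonClass μ]
    (hC : ∀ z, ∫⁻ w, ‖coulombKernel (z - w)‖ₑ ∂μ ≤ C) (z : ℝ²) :
    Integrable (fun q : ℝ² × ℝ² => circKernel z q.1 q.2) (μ.prod μ) ∧
      ‖coulombTransform μ z‖ ^ 2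
          - 2 * ∫ w, ⟪coulombKernel (z - w), coulombTransform μ w⟫ ∂μ
        = ∫ q : ℝ² × ℝ², circKernel z q.1 q.2 ∂(μ.prod μ) := by
  have hF : (fun q : ℝ² × ℝ² => ⟪coulombKernel (z - q.1), coulombKernel (z - q.2)⟫
      - ⟪coulombKernel (z - q.1), coulombKernel (q.1 - q.2)⟫
      - ⟪coulombKernel (z - q.2), coulombKernel (q.2 - q.1)⟫)
      =ᵐ[μ.prod μ] fun q => circKernel z q.1 q.2 := by
    filter_upwards [ae_prod_pairwise_ne z] with q ⟨h₁, h₂, h₃⟩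
    have := inner_coulombKernel_circumcircle (sub_ne_zero.2 h₁.symm) (sub_ne_zero.2 h₂.symm)
      (fun h => h₃ (sub_right_injective h))
    rwa [sub_sub_sub_cancel_left, sub_sub_sub_cancel_left] at this
  have h₁ := integrable_inner_coulombKernel_prod (hC z)
  have h₂ := integrable_inner_coulombKernel_chain hC z
  have h₁₂ : Integrable (fun q : ℝ² × ℝ² => ⟪coulombKernel (z - q.1), coulombKernel (z - q.2)⟫
      - ⟪coulombKernel (z - q.1), coulombKernel (q.1 - q.2)⟫) (μ.prod μ) := h₁.sub h₂
  have h₃ : Integrable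
      (fun q : ℝ² × ℝ² => ⟪coulombKernel (z - q.2), coulombKernel (q.2 - q.1)⟫) (μ.prod μ) :=
    h₂.swap
  have hswap : ∫ q : ℝ² × ℝ², ⟪coulombKernel (z - q.2), coulombKernel (q.2 - q.1)⟫ ∂(μ.prod μ)
      = ∫ q : ℝ² × ℝ², ⟪coulombKernel (z - q.1), coulombKernel (q.1 - q.2)⟫ ∂(μ.prod μ) :=
    integral_prod_swap
      (fun q : ℝ² × ℝ² => ⟪coulombKernel (z - q.1), coulombKernel (q.1 - q.2)⟫)
  refine ⟨(h₁₂.sub h₃).congr hF, ?_⟩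
  rw [← integral_congr_ae hF, integral_sub h₁₂ h₃, integral_sub h₁ h₂, hswap,
    integral_inner_coulombKernel_prod (hC z), integral_inner_coulombKernel_chain hC z]
  ring

end BoundedPotential

/-- The integrated circumcircle identity of Lemma `circumcircle`:
`|ℋμ(z)|² − 2 ℋ[μℋμ](z) = ∬_{w≠u} 2/D²(z−w,z−u) μ(dw)μ(du)`. -/
theorem coulomb_transform_circumcircle_identity (p : ℝ) (hp : 2 < p)
    (μ : Measure (EuclideanSpace ℝ (Fin 2))) (hμprob : IsProbabilityMeasure μ)
    (m : EuclideanSpace ℝ (Fin 2) → ℝ)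
    (hm : MemLp m (ENNReal.ofReal p) (volume : Measure (EuclideanSpace ℝ (Fin 2))))
    (hdens : μ = (volume : Measure (EuclideanSpace ℝ (Fin 2))).withDensity
      (fun w => ENNReal.ofReal (m w))) :
    ∀ z : EuclideanSpace ℝ (Fin 2),
      Integrable (fun w => (‖z - w‖ ^ 2)⁻¹ • (z - w)) μ ∧
      Integrable (fun w => ⟪(‖z - w‖ ^ 2)⁻¹ • (z - w), coulombTransform μ w⟫) μ ∧
      IntegrableOn
        (fun q : EuclideanSpace ℝ (Fin 2) × EuclideanSpace ℝ (Fin 2) =>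
          circKernel z q.1 q.2)
        {q | q.1 ≠ q.2} (μ.prod μ) ∧
      ‖coulombTransform μ z‖ ^ 2
          - 2 * ∫ w, ⟪(‖z - w‖ ^ 2)⁻¹ • (z - w), coulombTransform μ w⟫ ∂μ
        = ∫ q in {q : EuclideanSpace ℝ (Fin 2) × EuclideanSpace ℝ (Fin 2) | q.1 ≠ q.2},
            circKernel z q.1 q.2 ∂(μ.prod μ) := by
  have hpq := Real.HolderConjugate.conjExponent (by linarith : 1 < p)
  have hq : p.conjExponent < finrank ℝ ℝ² := by
    rw [finrank_euclideanSpace_fin, Real.conjExponent, div_lt_iff₀ (by linarith)]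
    push_cast
    linarith
  subst hdens
  obtain ⟨C, hC⟩ : ∃ C : ℝ≥0, ∀ z, ∫⁻ w, ‖coulombKernel (z - w)‖ₑ
      ∂volume.withDensity (fun w => ENNReal.ofReal (m w)) ≤ C := by
    refine ⟨(1 + eLpNorm m (ENNReal.ofReal p) volume * (∫⁻ x in ball (0 : ℝ²) 1,
      ENNReal.ofReal ‖x‖⁻¹ ^ p.conjExponent) ^ (1 / p.conjExponent)).toNNReal, fun z => ?_⟩
    rw [ENNReal.coe_toNNReal]
    · simpa only [enorm_coulombKernel, measure_univ] using
        lintegral_inv_norm_sub_withDensity_le hpq hm.1.aemeasurable z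
    · exact ENNReal.add_ne_top.2 ⟨ENNReal.one_ne_top, ENNReal.mul_ne_top hm.2.ne
        (ENNReal.rpow_ne_top_of_nonneg (by simp [hpq.symm.nonneg])
          (lintegral_ball_inv_norm_rpow_lt_top hpq.symm.pos hq).ne)⟩
  intro z
  obtain ⟨hint, hid⟩ := coulombTransform_circumcircle_identity_of_lintegral_le hC z
  refine ⟨integrable_coulombKernel_sub (hC z), integrable_inner_coulombKernel_coulombTransform hC z,
    hint.integrableOn, ?_⟩
  rw [Measure.restrict_eq_self_of_ae_mem (s := {q : ℝ² × ℝ² | q.1 ≠ q.2})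
    ((ae_prod_pairwise_ne z).mono fun _ h => h.2.2)]
  exact hid
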